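/- arXiv:0904.1459 — 5 statements merged into one kernel-verified Lean document; each statement's English description precedes it below -/
import Mathlib

section
/- Truncated non-resonance estimate (key claim in the proof of the normal form Theorem 4.1): Let ω : N → ℝ be a family of frequencies and let ℓ ≥ 3. Assume that for each r ∈ {ℓ−2, ℓ−1, ℓ} there exist γ_r > 0 and α_r ≥ 0 such that |Ω(k)| ≥ γ_r · μ(k)^{−α_r} for every multi-index k ∈ Z^r with k ∉ A_r. Let Λ > 0 be a cutoff with ω_0 ≤ Λ (where 0 ∈ N = ℤ^d), and let j = (j_1,…,j_ℓ) ∈ I_ℓ with j ∉ A_ℓ be a zero-moment multi-index having at most two components j_i = (a_i,δ_i) with ω_{a_i} > Λ; in the case of exactly two such components j_p and j_q, assume δ_p = −δ_q. Then |Ω^Λ(j)| ≥ γ · μ(j)^{−α}, where γ = min(γ_ℓ, γ_{ℓ−1}, γ_{ℓ−2}) and α = max(α_ℓ, α_{ℓ−1}, α_{ℓ−2}). -/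
open scoped BigOperators

/-- The index set `Z = ℤ^d × {±1}`; the sign `δ = ±1` is encoded by a `Bool`
(`true ↦ +1`, `false ↦ -1`). -/
abbrev Idx (d : ℕ) := (Fin d → ℤ) × Bool

/-- The sign associated with a boolean. -/
def sgn (b : Bool) : ℤ := if b then 1 else -1

/-- Conjugation `(a, δ) ↦ (a, -δ)`. -/
def conjIdx {d : ℕ} (j : Idx d) : Idx d := (j.1, !j.2)

/-- `|j| = max(1, ‖a‖)` with `‖a‖` the Euclidean norm of `a ∈ ℤ^d`. -/
noncomputable def absIdx {d : ℕ} (j : Idx d) : ℝ :=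
  max 1 (Real.sqrt (∑ i, ((j.1 i : ℝ)) ^ 2))

/-- The moment `M(j) = δ₁ a₁ + ⋯ + δ_ℓ a_ℓ ∈ ℤ^d` of a multi-index. -/
def moment {d ℓ : ℕ} (j : Fin ℓ → Idx d) : Fin d → ℤ :=
  ∑ i, sgn (j i).2 • (j i).1

/-- `Ω(j) = δ₁ ω_{a₁} + ⋯ + δ_ℓ ω_{a_ℓ}`. -/
def bigOmega {d ℓ : ℕ} (ω : (Fin d → ℤ) → ℝ) (j : Fin ℓ → Idx d) : ℝ :=
  ∑ i, (sgn (j i).2 : ℝ) * ω (j i).1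

/-- `j ∈ A_ℓ` : the multi-index depends only on the actions, i.e. `ℓ` is even and `j`
is a permutation of `((b₁,1),…,(b_{ℓ/2},1),(b₁,-1),…,(b_{ℓ/2},-1))`. -/
def dependsOnActions {d ℓ : ℕ} (j : Fin ℓ → Idx d) : Prop :=
  ∃ (m : ℕ) (b : Fin m → (Fin d → ℤ)), ℓ = 2 * m ∧
    Finset.univ.val.map j =
      Finset.univ.val.map (fun i => ((b i, true) : Idx d)) +
        Finset.univ.val.map (fun i => ((b i, false) : Idx d))

/-- `μ(j)`: the third largest element of `(|j₁|,…,|j_ℓ|)` (and `1` when `ℓ < 3`). -/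
noncomputable def mu {d ℓ : ℕ} (j : Fin ℓ → Idx d) : ℝ :=
  ((List.ofFn fun i => absIdx (j i)).insertionSort (· ≥ ·)).getD 2 1

/-- Truncated frequencies: `ω^Λ_a = ω_a` if `ω_a ≤ Λ`, and `0` otherwise. -/
noncomputable def truncFreq {d : ℕ} (ω : (Fin d → ℤ) → ℝ) (Λ : ℝ) (a : Fin d → ℤ) : ℝ :=
  if ω a ≤ Λ then ω a else 0

/-!
Deleting the (at most two) components of `j` whose frequency exceeds the cutoff leaves a
multi-index `k` of length `ℓ`, `ℓ - 1` or `ℓ - 2` with `Ω^Λ(j) = Ω(k)` and `μ(k) ≤ μ(j)`, so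
the non-resonance estimate for `k` applies as soon as `k ∉ A`. If one component was deleted and
`k ∈ A`, that component carries the whole zero moment, so it is `(0, δ)`, whose frequency is
below the cutoff. If two components of opposite signs were deleted and `k ∈ A`, their moments
cancel, so they form a conjugate pair and `j ∈ A` as well.
-/

open Finset

namespace List

variable {α : Type*} [LinearOrder α] {x : α}

theorem getD_succ_le_getD_of_pairwise_ge {l : List α} (hl : l.Pairwise (· ≥ ·))
    (hx : ∀ y ∈ l, x ≤ y) (n : ℕ) : l.getD (n + 1) x ≤ l.getD n x := by
  induction l generalizing n with
  | nil => simp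
  | cons a t ih =>
    rcases n with _ | n
    · cases t with
      | nil => simpa using hx a mem_cons_self
      | cons b t => simpa using (pairwise_cons.mp hl).1 b mem_cons_self
    · simpa using ih hl.of_cons (fun y hy => hx y (mem_cons_of_mem a hy)) n

theorem Sublist.getD_le_getD_of_pairwise_ge {s₁ s₂ : List α} (h : s₁ <+ s₂)
    (hs : s₂.Pairwise (· ≥ ·)) (hx : ∀ y ∈ s₂, x ≤ y) (n : ℕ) :
    s₁.getD n x ≤ s₂.getD n x := by
  induction h generalizing n with
  | slnil => rfl
  | cons a _ ih =>
    exact (ih hs.of_cons (fun y hy => hx y (mem_cons_of_mem a hy)) n).trans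
      (getD_succ_le_getD_of_pairwise_ge hs hx n)
  | cons_cons a _ ih =>
    rcases n with _ | n
    · rfl
    · exact ih hs.of_cons (fun y hy => hx y (mem_cons_of_mem a hy)) n

theorem Subperm.getD_insertionSort_ge_le {l₁ l₂ : List α} (h : l₁ <+~ l₂)
    (hx : ∀ y ∈ l₂, x ≤ y) (n : ℕ) :
    (l₁.insertionSort (· ≥ ·)).getD n x ≤ (l₂.insertionSort (· ≥ ·)).getD n x :=
  (sublist_insertionSort' (pairwise_insertionSort _ _)
      ((perm_insertionSort _ _).subperm.trans h)).getD_le_getD_of_pairwise_ge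
    (pairwise_insertionSort _ _) (fun y hy => hx y ((mem_insertionSort _).1 hy)) n

end List

theorem Fin.univ_val_map_eq_cons_removeNth {α : Type*} {n : ℕ} (f : Fin (n + 1) → α)
    (p : Fin (n + 1)) : univ.val.map f = f p ::ₘ univ.val.map (p.removeNth f) := by
  rw [Fin.univ_succAbove n p, cons_val, Multiset.map_cons, map_val, Multiset.map_map]
  rfl

theorem sgn_not (b : Bool) : sgn (!b) = -sgn b := by
  cases b <;> simp [sgn]

theorem sgn_smul_eq_zero_iff {M : Type*} [AddCommGroup M] (b : Bool) {v : M} :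
    sgn b • v = 0 ↔ v = 0 := by
  cases b <;> simp [sgn]

section SignedSum

variable {d ℓ n : ℕ} {M : Type*} [AddCommGroup M]

def signedSum (g : (Fin d → ℤ) → M) (j : Fin ℓ → Idx d) : M :=
  ∑ i, sgn (j i).2 • g (j i).1

theorem moment_eq_signedSum (j : Fin ℓ → Idx d) : moment j = signedSum id j := rfl

theorem bigOmega_eq_signedSum (ω : (Fin d → ℤ) → ℝ) (j : Fin ℓ → Idx d) :
    bigOmega ω j = signedSum ω j := by
  simp only [bigOmega, signedSum, zsmul_eq_mul]

theorem signedSum_eq_add_removeNth (g : (Fin d → ℤ) → M) (j : Fin (n + 1) → Idx d)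
    (p : Fin (n + 1)) : signedSum g j = sgn (j p).2 • g (j p).1 + signedSum g (p.removeNth j) :=
  Fin.sum_univ_succAbove _ p

theorem signedSum_eq_zero_of_dependsOnActions (g : (Fin d → ℤ) → M) {k : Fin ℓ → Idx d}
    (hk : dependsOnActions k) : signedSum g k = 0 := by
  obtain ⟨m, b, -, hmap⟩ := hk
  have hsum : signedSum g k = ((univ.val.map k).map fun z => sgn z.2 • g z.1).sum := by
    rw [Multiset.map_map]; rfl
  rw [hsum, hmap, Multiset.map_add, Multiset.sum_add, Multiset.map_map, Multiset.map_map]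
  change ∑ i, sgn true • g (b i) + ∑ i, sgn false • g (b i) = 0
  simp [sgn]

end SignedSum

section MultiIndex

variable {d ℓ n : ℕ}

theorem dependsOnActions_of_univ_val_map_eq_cons_cons {j : Fin (ℓ + 2) → Idx d}
    {k : Fin ℓ → Idx d} (a : Fin d → ℤ) (δ : Bool) (hk : dependsOnActions k)
    (hmap : univ.val.map j = (a, δ) ::ₘ (a, !δ) ::ₘ univ.val.map k) :
    dependsOnActions j := by
  obtain ⟨m, b, hm, hkb⟩ := hk
  refine ⟨m + 1, Fin.cons a b, by omega, ?_⟩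
  rw [hmap, hkb]
  simp only [Fin.univ_val_map, List.ofFn_succ, Fin.cons_zero, Fin.cons_succ,
    ← Multiset.cons_coe, Multiset.cons_add, Multiset.add_cons]
  cases δ
  · rfl
  · exact Multiset.cons_swap _ _ _

theorem one_le_mu (j : Fin ℓ → Idx d) : 1 ≤ mu j :=
  List.nil_subperm.getD_insertionSort_ge_le (by simp [absIdx]) 2

theorem mu_removeNth_le (j : Fin (n + 1) → Idx d) (p : Fin (n + 1)) :
    mu (p.removeNth j) ≤ mu j := by
  refine List.Subperm.getD_insertionSort_ge_le ?_ (by simp [absIdx]) 2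
  rw [← Multiset.coe_le, ← Fin.univ_val_map, ← Fin.univ_val_map,
    Fin.univ_val_map_eq_cons_removeNth (fun i => absIdx (j i)) p]
  exact Multiset.le_cons_self _ _

end MultiIndex

section Truncation

variable {d ℓ n : ℕ} {ω : (Fin d → ℤ) → ℝ} {Λ : ℝ}

noncomputable def aboveCutoff (ω : (Fin d → ℤ) → ℝ) (Λ : ℝ) (j : Fin ℓ → Idx d) :
    Finset (Fin ℓ) :=
  univ.filter fun i => Λ < ω (j i).1

theorem mem_aboveCutoff {j : Fin ℓ → Idx d} {i : Fin ℓ} :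
    i ∈ aboveCutoff ω Λ j ↔ Λ < ω (j i).1 := by
  simp [aboveCutoff]

theorem bigOmega_truncFreq_eq_bigOmega {j : Fin ℓ → Idx d} (h : ∀ i, ω (j i).1 ≤ Λ) :
    bigOmega (truncFreq ω Λ) j = bigOmega ω j :=
  sum_congr rfl fun i _ => by rw [truncFreq, if_pos (h i)]

theorem bigOmega_truncFreq_eq_removeNth {j : Fin (n + 1) → Idx d} {p : Fin (n + 1)}
    (hp : Λ < ω (j p).1) :
    bigOmega (truncFreq ω Λ) j = bigOmega (truncFreq ω Λ) (p.removeNth j) := by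
  rw [bigOmega_eq_signedSum, bigOmega_eq_signedSum, signedSum_eq_add_removeNth _ _ p,
    truncFreq, if_neg hp.not_ge, smul_zero, zero_add]

theorem exists_reduct_of_aboveCutoff_eq_singleton {j : Fin (n + 1) → Idx d}
    (hmom : moment j = 0) (hω0 : ω 0 ≤ Λ) {p : Fin (n + 1)}
    (hS : aboveCutoff ω Λ j = {p}) :
    ∃ k : Fin n → Idx d, ¬ dependsOnActions k ∧ mu k ≤ mu j ∧
      bigOmega (truncFreq ω Λ) j = bigOmega ω k := by
  have hlarge : ∀ i, Λ < ω (j i).1 ↔ i = p := fun i => by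
    rw [← mem_aboveCutoff, hS, mem_singleton]
  refine ⟨p.removeNth j, ?_, mu_removeNth_le j p, ?_⟩
  · intro hk
    rw [moment_eq_signedSum, signedSum_eq_add_removeNth _ _ p,
      signedSum_eq_zero_of_dependsOnActions _ hk, add_zero, sgn_smul_eq_zero_iff, id] at hmom
    exact ((hlarge p).2 rfl).not_ge (hmom ▸ hω0)
  · rw [bigOmega_truncFreq_eq_removeNth ((hlarge p).2 rfl), bigOmega_truncFreq_eq_bigOmega]
    exact fun i => not_lt.1 fun h => Fin.succAbove_ne p i ((hlarge _).1 h)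

theorem exists_reduct_of_aboveCutoff_eq_pair {j : Fin (n + 2) → Idx d}
    (hmom : moment j = 0) (hA : ¬ dependsOnActions j) {p : Fin (n + 2)} {q : Fin (n + 1)}
    (hS : aboveCutoff ω Λ j = {p, p.succAbove q}) (hδ : (j p).2 = !(j (p.succAbove q)).2) :
    ∃ k : Fin n → Idx d, ¬ dependsOnActions k ∧ mu k ≤ mu j ∧
      bigOmega (truncFreq ω Λ) j = bigOmega ω k := by
  have hlarge : ∀ i, Λ < ω (j i).1 ↔ i = p ∨ i = p.succAbove q := fun i => by
    rw [← mem_aboveCutoff, hS, mem_insert, mem_singleton]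
  refine ⟨q.removeNth (p.removeNth j), ?_, (mu_removeNth_le _ q).trans (mu_removeNth_le j p), ?_⟩
  · intro hk
    rw [moment_eq_signedSum, signedSum_eq_add_removeNth _ _ p, signedSum_eq_add_removeNth _ _ q,
      signedSum_eq_zero_of_dependsOnActions _ hk, add_zero, Fin.removeNth_apply, hδ, sgn_not,
      neg_smul, neg_add_eq_zero, ← sub_eq_zero, ← smul_sub, sgn_smul_eq_zero_iff,
      sub_eq_zero] at hmom
    have hconj : j (p.succAbove q) = ((j p).1, !(j p).2) :=
      Prod.ext hmom.symm (by rw [hδ, Bool.not_not])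
    refine hA (dependsOnActions_of_univ_val_map_eq_cons_cons (j p).1 (j p).2 hk ?_)
    rw [Fin.univ_val_map_eq_cons_removeNth j p, Fin.univ_val_map_eq_cons_removeNth _ q,
      Fin.removeNth_apply, hconj]
  · rw [bigOmega_truncFreq_eq_removeNth ((hlarge p).2 (.inl rfl)),
      bigOmega_truncFreq_eq_removeNth (p := q) ((hlarge _).2 (.inr rfl)),
      bigOmega_truncFreq_eq_bigOmega]
    refine fun i => not_lt.1 fun h => ?_
    rcases (hlarge _).1 h with h | h
    · exact Fin.succAbove_ne p _ h
    · exact Fin.succAbove_ne q i (Fin.succAbove_right_injective h)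

end Truncation

theorem mul_rpow_neg_le_mul_rpow_neg {γ γ' α α' x y : ℝ} (hγ : 0 ≤ γ) (hγγ' : γ ≤ γ')
    (hα : 0 ≤ α) (hα'α : α' ≤ α) (hx : 1 ≤ x) (hxy : x ≤ y) :
    γ * y ^ (-α) ≤ γ' * x ^ (-α') :=
  calc γ * y ^ (-α) ≤ γ * x ^ (-α') := by
        gcongr γ * ?_
        calc y ^ (-α) ≤ x ^ (-α) :=
              Real.rpow_le_rpow_of_nonpos (by positivity) hxy (neg_nonpos.2 hα)
          _ ≤ x ^ (-α') := Real.rpow_le_rpow_of_exponent_le hx (neg_le_neg hα'α)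
    _ ≤ γ' * x ^ (-α') := by gcongr

theorem le_abs_of_exists_nonresonant_reduct {d ℓ r : ℕ} {ω : (Fin d → ℤ) → ℝ}
    {γ γr α αr W : ℝ} {j : Fin ℓ → Idx d} (hγ : 0 ≤ γ) (hγr : γ ≤ γr) (hα : 0 ≤ α)
    (hαr : αr ≤ α)
    (hres : ∀ k : Fin r → Idx d, ¬ dependsOnActions k → γr * mu k ^ (-αr) ≤ |bigOmega ω k|)
    (h : ∃ k : Fin r → Idx d, ¬ dependsOnActions k ∧ mu k ≤ mu j ∧ W = bigOmega ω k) :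
    γ * mu j ^ (-α) ≤ |W| := by
  obtain ⟨k, hk, hμ, rfl⟩ := h
  exact (mul_rpow_neg_le_mul_rpow_neg hγ hγr hα hαr (one_le_mu k) hμ).trans (hres k hk)

theorem truncated_nonresonance_estimate_general
    {d : ℕ} (ω : (Fin d → ℤ) → ℝ) (ℓ : ℕ)
    (γℓ γℓ1 γℓ2 αℓ αℓ1 αℓ2 : ℝ)
    (hγℓ : 0 < γℓ) (hγℓ1 : 0 < γℓ1) (hγℓ2 : 0 < γℓ2)
    (hαℓ : 0 ≤ αℓ)
    (hresℓ : ∀ k : Fin ℓ → Idx d, ¬ dependsOnActions k →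
      γℓ * mu k ^ (-αℓ) ≤ |bigOmega ω k|)
    (hresℓ1 : ∀ k : Fin (ℓ - 1) → Idx d, ¬ dependsOnActions k →
      γℓ1 * mu k ^ (-αℓ1) ≤ |bigOmega ω k|)
    (hresℓ2 : ∀ k : Fin (ℓ - 2) → Idx d, ¬ dependsOnActions k →
      γℓ2 * mu k ^ (-αℓ2) ≤ |bigOmega ω k|)
    (Λ : ℝ) (hω0 : ω 0 ≤ Λ)
    (j : Fin ℓ → Idx d) (hmom : moment j = 0) (hA : ¬ dependsOnActions j)
    (hbig : (Finset.univ.filter (fun i => Λ < ω (j i).1)).card ≤ 2)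
    (hpair : ∀ p q : Fin ℓ, p ≠ q → Λ < ω (j p).1 → Λ < ω (j q).1 →
      (j p).2 = !(j q).2) :
    min (min γℓ γℓ1) γℓ2 * mu j ^ (-(max (max αℓ αℓ1) αℓ2)) ≤
      |bigOmega (truncFreq ω Λ) j| := by
  have hγ : 0 ≤ min (min γℓ γℓ1) γℓ2 := by positivity
  have hα : 0 ≤ max (max αℓ αℓ1) αℓ2 := le_max_of_le_left (le_max_of_le_left hαℓ)
  have hcardℓ : (aboveCutoff ω Λ j).card ≤ ℓ := (card_le_univ _).trans_eq (Fintype.card_fin ℓ)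
  have hcard2 : (aboveCutoff ω Λ j).card ≤ 2 := hbig
  interval_cases hc : (aboveCutoff ω Λ j).card
  · refine le_abs_of_exists_nonresonant_reduct hγ (by simp) hα (by simp) hresℓ
      ⟨j, hA, le_rfl, bigOmega_truncFreq_eq_bigOmega fun i => not_lt.1 fun h => ?_⟩
    simpa [card_eq_zero.1 hc] using mem_aboveCutoff.2 h
  · obtain ⟨n, rfl⟩ : ∃ n, ℓ = n + 1 := ⟨ℓ - 1, by omega⟩
    obtain ⟨p, hp⟩ := card_eq_one.1 hc
    exact le_abs_of_exists_nonresonant_reduct hγ (by simp) hα (by simp) hresℓ1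
      (exists_reduct_of_aboveCutoff_eq_singleton hmom hω0 hp)
  · obtain ⟨n, rfl⟩ : ∃ n, ℓ = n + 2 := ⟨ℓ - 2, by omega⟩
    obtain ⟨p, q, hpq, hpq'⟩ := card_eq_two.1 hc
    obtain ⟨q, rfl⟩ := Fin.exists_succAbove_eq hpq.symm
    exact le_abs_of_exists_nonresonant_reduct hγ (by simp) hα (by simp) hresℓ2
      (exists_reduct_of_aboveCutoff_eq_pair hmom hA hpq' (hpair _ _ hpq
        (mem_aboveCutoff.1 (by simp [hpq'])) (mem_aboveCutoff.1 (by simp [hpq']))))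

/-- Truncated non-resonance estimate, key claim in the proof of
Theorem 4.1. Under the non-resonance hypothesis for the arities `ℓ-2, ℓ-1, ℓ`, a
zero-moment multi-index `j ∉ A_ℓ` with at most two components whose frequency exceeds the
cutoff `Λ` (of opposite signs if there are exactly two) satisfies
`|Ω^Λ(j)| ≥ γ μ(j)^{-α}` with `γ = min(γ_ℓ, γ_{ℓ-1}, γ_{ℓ-2})`,
`α = max(α_ℓ, α_{ℓ-1}, α_{ℓ-2})`. -/
theorem truncated_nonresonance_estimate
    {d : ℕ} (hd : 1 ≤ d) (ω : (Fin d → ℤ) → ℝ) (ℓ : ℕ) (hℓ : 3 ≤ ℓ)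
    (γℓ γℓ1 γℓ2 αℓ αℓ1 αℓ2 : ℝ)
    (hγℓ : 0 < γℓ) (hγℓ1 : 0 < γℓ1) (hγℓ2 : 0 < γℓ2)
    (hαℓ : 0 ≤ αℓ) (hαℓ1 : 0 ≤ αℓ1) (hαℓ2 : 0 ≤ αℓ2)
    (hresℓ : ∀ k : Fin ℓ → Idx d, ¬ dependsOnActions k →
      γℓ * mu k ^ (-αℓ) ≤ |bigOmega ω k|)
    (hresℓ1 : ∀ k : Fin (ℓ - 1) → Idx d, ¬ dependsOnActions k →
      γℓ1 * mu k ^ (-αℓ1) ≤ |bigOmega ω k|)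
    (hresℓ2 : ∀ k : Fin (ℓ - 2) → Idx d, ¬ dependsOnActions k →
      γℓ2 * mu k ^ (-αℓ2) ≤ |bigOmega ω k|)
    (Λ : ℝ) (hΛ : 0 < Λ) (hω0 : ω 0 ≤ Λ)
    (j : Fin ℓ → Idx d) (hmom : moment j = 0) (hA : ¬ dependsOnActions j)
    (hbig : (Finset.univ.filter (fun i => Λ < ω (j i).1)).card ≤ 2)
    (hpair : ∀ p q : Fin ℓ, p ≠ q → Λ < ω (j p).1 → Λ < ω (j q).1 →
      (j p).2 = !(j q).2) :
    min (min γℓ γℓ1) γℓ2 * mu j ^ (-(max (max αℓ αℓ1) αℓ2)) ≤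
      |bigOmega (truncFreq ω Λ) j| :=
  truncated_nonresonance_estimate_general ω ℓ γℓ γℓ1 γℓ2 αℓ αℓ1 αℓ2 hγℓ hγℓ1 hγℓ2 hαℓ hresℓ hresℓ1
    hresℓ2 Λ hω0 j hmom hA hbig hpair
end

section
/- Continuous bootstrap lemma (core of the proof of Theorem 4.3): Let C > 0, let r ≥ 3 be an integer, let A ∈ [0,1], ε ∈ (0,1], T > 0, and let N : [0,T] → [0,∞) be a differentiable function with N(0) ≤ ε² such that for every t ∈ [0,T], if N(t) ≤ (9/4)ε² then |N′(t)| ≤ C·(A·N(t)^{3/2} + N(t)^{(r+1)/2}). Then there exists a constant c > 0 depending only on C and r (for instance c = 5/(4C(3/2)^{r+1})) such that N(t) ≤ (9/4)ε² for every t ∈ [0,T] with t ≤ c/(Aε + ε^{r−1}). -/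
/-!
While `N ≤ (9/4)ε²`, the hypothesis bounds `N'` by `L = C (3/2)^{r+1} (Aε + ε^{r-1}) ε²`
(insert `N ≤ (3ε/2)²` into both powers), so `N` can grow at most linearly, `N s ≤ ε² + L s`.
The time restriction says exactly `ε² + L t ≤ (9/4)ε²`. Since `L > 0`, the linear barrier stays
strictly below the threshold before time `t`, so `N` cannot reach the threshold there: at the
first time it did, the linear bound would already apply and contradict it.
-/

open Set

section

variable {f f' : ℝ → ℝ} {a b : ℝ}

theorem image_le_add_mul_of_hasDerivWithinAt_le
    (hf : ∀ x ∈ Icc a b, HasDerivWithinAt f (f' x) (Icc a b) x) {y₀ L : ℝ} (ha : f a ≤ y₀)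
    (hf' : ∀ x ∈ Ico a b, f' x ≤ L) : ∀ x ∈ Icc a b, f x ≤ y₀ + L * (x - a) := by
  have hB : ∀ x, HasDerivAt (fun x ↦ y₀ + L * (x - a)) L x := fun x ↦ by
    simpa using ((hasDerivAt_id x).sub_const a).const_mul L |>.const_add y₀
  refine image_le_of_deriv_right_le_deriv_boundary (fun x hx ↦ (hf x hx).continuousWithinAt)
    (fun x hx ↦ (hf x (Ico_subset_Icc_self hx)).mono_of_mem_nhdsWithin
      (Icc_mem_nhdsGE_of_mem hx)) (by simpa using ha)
    (fun x _ ↦ (hB x).continuousAt.continuousWithinAt) (fun x _ ↦ (hB x).hasDerivWithinAt) hf'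

theorem image_le_add_mul_of_deriv_le_of_lt
    (hf : ∀ x ∈ Icc a b, HasDerivWithinAt f (f' x) (Icc a b) x) {y₀ L K : ℝ} (ha : f a ≤ y₀)
    (hL : 0 < L) (hK : y₀ + L * (b - a) ≤ K) (hf' : ∀ x ∈ Ico a b, f x < K → f' x ≤ L) :
    ∀ x ∈ Icc a b, f x ≤ y₀ + L * (x - a) := by
  suffices hbelow : ∀ x ∈ Ico a b, f x < K from
    image_le_add_mul_of_hasDerivWithinAt_le hf ha fun x hx ↦ hf' x hx (hbelow x hx)
  by_contra! ⟨x₁, hx₁, hKx₁⟩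
  have hsub : Icc a x₁ ⊆ Icc a b := Icc_subset_Icc_right hx₁.2.le
  set S := Icc a x₁ ∩ f ⁻¹' Ici K
  have hS : IsClosed S := ContinuousOn.preimage_isClosed_of_isClosed
    (fun x hx ↦ ((hf x (hsub hx)).continuousWithinAt.mono hsub)) isClosed_Icc isClosed_Ici
  have hSne : S.Nonempty := ⟨x₁, right_mem_Icc.2 hx₁.1, hKx₁⟩
  have hSbdd : BddBelow S := ⟨a, fun x hx ↦ hx.1.1⟩
  set τ := sInf S
  obtain ⟨⟨haτ, hτx₁⟩, hKτ⟩ : τ ∈ Icc a x₁ ∧ K ≤ f τ := hS.csInf_mem hSne hSbdd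
  have hτ : Icc a τ ⊆ Icc a b := Icc_subset_Icc_right (hτx₁.trans hx₁.2.le)
  have hlt : ∀ x ∈ Ico a τ, f x < K := fun x hx ↦ by
    by_contra! hKx
    exact (csInf_le hSbdd ⟨⟨hx.1, hx.2.le.trans hτx₁⟩, hKx⟩).not_gt hx.2
  have hfτ := image_le_add_mul_of_hasDerivWithinAt_le (fun x hx ↦ (hf x (hτ hx)).mono hτ) ha
    (fun x hx ↦ hf' x ⟨hx.1, hx.2.trans_le (hτx₁.trans hx₁.2.le)⟩ (hlt x hx))
    τ (right_mem_Icc.2 haτ)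
  have : L * (τ - a) < L * (b - a) := by gcongr; linarith [hx₁.2]
  linarith

end

theorem rpow_div_two_le_pow {x b : ℝ} (hx : 0 ≤ x) (hb : 0 ≤ b) (hxb : x ≤ b ^ 2) (k : ℕ) :
    x ^ ((k : ℝ) / 2) ≤ b ^ k :=
  calc x ^ ((k : ℝ) / 2) ≤ (b ^ 2) ^ ((k : ℝ) / 2) := by gcongr
    _ = b ^ k := by
      rw [← Real.rpow_natCast b 2, ← Real.rpow_mul hb, ← Real.rpow_natCast b k]
      congr 1; push_cast; ring

theorem nonlinearity_le_of_le_sq {C A ε n : ℝ} {r : ℕ} (hC : 0 ≤ C) (hA : 0 ≤ A) (hε : 0 ≤ ε)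
    (hr : 2 ≤ r) (hn : 0 ≤ n) (hnε : n ≤ 9 / 4 * ε ^ 2) :
    C * (A * n ^ ((3 : ℝ) / 2) + n ^ (((r : ℝ) + 1) / 2)) ≤
      C * (3 / 2) ^ (r + 1) * (A * ε + ε ^ (r - 1)) * ε ^ 2 := by
  have hnb : n ≤ (3 / 2 * ε) ^ 2 := by linarith
  have h3 := rpow_div_two_le_pow hn (by positivity) hnb 3
  have hr1 := rpow_div_two_le_pow hn (by positivity) hnb (r + 1)
  push_cast at h3 hr1
  obtain ⟨m, rfl⟩ := Nat.exists_eq_add_of_le' hr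
  have hpow : (3 / 2 : ℝ) ^ 3 ≤ (3 / 2) ^ (m + 2 + 1) := pow_le_pow_right₀ (by norm_num) (by omega)
  calc C * (A * n ^ ((3 : ℝ) / 2) + n ^ (((↑(m + 2) : ℝ) + 1) / 2))
      ≤ C * (A * ((3 / 2) ^ 3 * ε ^ 3) + (3 / 2 * ε) ^ (m + 2 + 1)) := by
        rw [← mul_pow]; gcongr
    _ ≤ C * (A * ((3 / 2) ^ (m + 2 + 1) * ε ^ 3) + (3 / 2 * ε) ^ (m + 2 + 1)) := by gcongr
    _ = _ := by rw [show m + 2 - 1 = m + 1 by omega]; ring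

theorem continuous_bootstrap_general
    (C : ℝ) (hC : 0 < C) (r : ℕ) (hr : 3 ≤ r)
    (A : ℝ) (hA0 : 0 ≤ A) (ε : ℝ) (hε0 : 0 < ε)
    (T : ℝ) (N N' : ℝ → ℝ)
    (hNpos : ∀ t ∈ Set.Icc (0 : ℝ) T, 0 ≤ N t)
    (hNdiff : ∀ t ∈ Set.Icc (0 : ℝ) T, HasDerivWithinAt N (N' t) (Set.Icc (0 : ℝ) T) t)
    (hN0 : N 0 ≤ ε ^ 2)
    (hNder : ∀ t ∈ Set.Icc (0 : ℝ) T, N t ≤ 9 / 4 * ε ^ 2 →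
      |N' t| ≤ C * (A * N t ^ ((3 : ℝ) / 2) + N t ^ (((r : ℝ) + 1) / 2))) :
    ∀ t ∈ Set.Icc (0 : ℝ) T,
      t ≤ (5 / (4 * C * (3 / 2 : ℝ) ^ (r + 1))) / (A * ε + ε ^ (r - 1)) →
      N t ≤ 9 / 4 * ε ^ 2 := by
  intro t ⟨ht0, htT⟩ ht
  set D := A * ε + ε ^ (r - 1)
  have htD : t * D ≤ 5 / (4 * C * (3 / 2 : ℝ) ^ (r + 1)) := (le_div_iff₀ (by positivity)).1 ht
  have hgrowth : ε ^ 2 + C * (3 / 2) ^ (r + 1) * D * ε ^ 2 * (t - 0) ≤ 9 / 4 * ε ^ 2 :=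
    calc ε ^ 2 + C * (3 / 2) ^ (r + 1) * D * ε ^ 2 * (t - 0)
        = ε ^ 2 + C * (3 / 2) ^ (r + 1) * (t * D) * ε ^ 2 := by ring
      _ ≤ ε ^ 2 + C * (3 / 2) ^ (r + 1) * (5 / (4 * C * (3 / 2 : ℝ) ^ (r + 1))) * ε ^ 2 := by
        gcongr
      _ = 9 / 4 * ε ^ 2 := by field_simp; ring
  have hsub : Icc 0 t ⊆ Icc 0 T := Icc_subset_Icc_right htT
  refine le_trans ?_ hgrowth
  refine image_le_add_mul_of_deriv_le_of_lt (fun x hx ↦ (hNdiff x (hsub hx)).mono hsub) hN0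
    (by positivity) hgrowth (fun x hx hNx ↦ ?_) t (right_mem_Icc.2 ht0)
  have hx : x ∈ Icc 0 T := hsub (Ico_subset_Icc_self hx)
  calc N' x ≤ |N' x| := le_abs_self _
    _ ≤ C * (A * N x ^ ((3 : ℝ) / 2) + N x ^ (((r : ℝ) + 1) / 2)) := hNder x hx hNx.le
    _ ≤ C * (3 / 2) ^ (r + 1) * D * ε ^ 2 :=
      nonlinearity_le_of_le_sq hC.le hA0 hε0.le (by omega) (hNpos x hx) hNx.le

/-- Continuous bootstrap lemma, core of the proof of Theorem 4.3.
If `N : [0,T] → [0,∞)` is differentiable, `N(0) ≤ ε²`, and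
`|N'(t)| ≤ C (A N(t)^{3/2} + N(t)^{(r+1)/2})` whenever `N(t) ≤ (9/4)ε²`, then with
`c = 5/(4C(3/2)^{r+1})` one has `N(t) ≤ (9/4)ε²` for all `t ∈ [0,T]` with
`t ≤ c/(Aε + ε^{r-1})`. -/
theorem continuous_bootstrap
    (C : ℝ) (hC : 0 < C) (r : ℕ) (hr : 3 ≤ r)
    (A : ℝ) (hA0 : 0 ≤ A) (hA1 : A ≤ 1) (ε : ℝ) (hε0 : 0 < ε) (hε1 : ε ≤ 1)
    (T : ℝ) (hT : 0 < T) (N N' : ℝ → ℝ)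
    (hNpos : ∀ t ∈ Set.Icc (0 : ℝ) T, 0 ≤ N t)
    (hNdiff : ∀ t ∈ Set.Icc (0 : ℝ) T, HasDerivWithinAt N (N' t) (Set.Icc (0 : ℝ) T) t)
    (hN0 : N 0 ≤ ε ^ 2)
    (hNder : ∀ t ∈ Set.Icc (0 : ℝ) T, N t ≤ 9 / 4 * ε ^ 2 →
      |N' t| ≤ C * (A * N t ^ ((3 : ℝ) / 2) + N t ^ (((r : ℝ) + 1) / 2))) :
    ∀ t ∈ Set.Icc (0 : ℝ) T,
      t ≤ (5 / (4 * C * (3 / 2 : ℝ) ^ (r + 1))) / (A * ε + ε ^ (r - 1)) →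
      N t ≤ 9 / 4 * ε ^ 2 :=
  continuous_bootstrap_general C hC r hr A hA0 ε hε0 T N N' hNpos hNdiff hN0 hNder
end

section
/- Discrete bootstrap lemma (core of the proof of Theorem 4.4): Let C > 0, let r ≥ 3 be an integer, let A ∈ [0,1] and ε ∈ (0,1]. Let (N_n)_{n≥0} be a sequence of nonnegative real numbers with N_0 ≤ ε² such that for every n, if N_n ≤ (9/4)ε² then |N_{n+1} − N_n| ≤ C·(A·N_n^{3/2} + N_n^{(r+1)/2}). Then there exists a constant c > 0 depending only on C and r (for instance c = 5/(4C(3/2)^{r+1})) such that N_n ≤ (9/4)ε² for every integer n with n ≤ c/(Aε + ε^{r−1}). -/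
/-!
As long as `N_k ≤ (9/4)ε² = (3ε/2)²`, the step hypothesis bounds every increment by
`D = C (3/2)^{r+1} (Aε + ε^{r-1}) ε²`, so `N_n ≤ ε² + nD`. The choice of `c` makes `nD ≤ (5/4)ε²`
on the whole time range, so the a priori bound `N_n ≤ (9/4)ε²` is never lost.
-/

theorem le_add_mul_of_sub_le_of_le {N : ℕ → ℝ} {a b D : ℝ} (hD : 0 ≤ D) (h0 : N 0 ≤ a)
    (hstep : ∀ k, N k ≤ a + b → N (k + 1) - N k ≤ D) :
    ∀ m : ℕ, (m : ℝ) * D ≤ b → N m ≤ a + m * D := by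
  intro m
  induction m with
  | zero => intro _; simpa using h0
  | succ k ih =>
    intro hk
    push_cast at hk ⊢
    have hNk : N k ≤ a + k * D := ih (by nlinarith)
    have := hstep k (by nlinarith)
    linarith

theorem rpow_natCast_div_two_le_pow {x y : ℝ} (hx : 0 ≤ x) (hy : 0 ≤ y) (hxy : x ≤ y ^ 2)
    (k : ℕ) : x ^ ((k : ℝ) / 2) ≤ y ^ k := by
  calc x ^ ((k : ℝ) / 2) ≤ (y ^ 2) ^ ((k : ℝ) / 2) := by gcongr
    _ = y ^ k := by
      rw [← Real.rpow_natCast y 2, ← Real.rpow_mul hy, Nat.cast_ofNat,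
        mul_div_cancel₀ _ two_ne_zero, Real.rpow_natCast]

theorem mul_rpow_three_halves_add_rpow_le {A ε x : ℝ} {r : ℕ} (hr : 2 ≤ r) (hA : 0 ≤ A)
    (hε : 0 ≤ ε) (hx : 0 ≤ x) (hxε : x ≤ (3 / 2 * ε) ^ 2) :
    A * x ^ ((3 : ℝ) / 2) + x ^ (((r : ℝ) + 1) / 2)
      ≤ (3 / 2) ^ (r + 1) * (A * ε + ε ^ (r - 1)) * ε ^ 2 := by
  have hy : 0 ≤ 3 / 2 * ε := by positivity
  have h3 : x ^ ((3 : ℝ) / 2) ≤ (3 / 2 * ε) ^ 3 := by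
    exact_mod_cast rpow_natCast_div_two_le_pow hx hy hxε 3
  have hr1 : x ^ (((r : ℝ) + 1) / 2) ≤ (3 / 2 * ε) ^ (r + 1) := by
    exact_mod_cast rpow_natCast_div_two_le_pow hx hy hxε (r + 1)
  have hpow : (3 / 2 : ℝ) ^ 3 ≤ (3 / 2) ^ (r + 1) := pow_le_pow_right₀ (by norm_num) (by omega)
  have hεr : ε ^ (r + 1) = ε ^ (r - 1) * ε ^ 2 := by rw [← pow_add]; congr 1; omega
  calc A * x ^ ((3 : ℝ) / 2) + x ^ (((r : ℝ) + 1) / 2)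
      ≤ A * ((3 / 2) ^ 3 * ε ^ 3) + (3 / 2) ^ (r + 1) * ε ^ (r + 1) := by
        rw [← mul_pow, ← mul_pow]; gcongr
    _ ≤ A * ((3 / 2) ^ (r + 1) * ε ^ 3) + (3 / 2) ^ (r + 1) * ε ^ (r + 1) := by gcongr
    _ = (3 / 2) ^ (r + 1) * (A * ε + ε ^ (r - 1)) * ε ^ 2 := by rw [hεr]; ring

theorem discrete_bootstrap_general
    (C : ℝ) (hC : 0 < C) (r : ℕ) (hr : 3 ≤ r)
    (A : ℝ) (hA0 : 0 ≤ A) (ε : ℝ) (hε0 : 0 < ε)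
    (N : ℕ → ℝ) (hNpos : ∀ n, 0 ≤ N n) (hN0 : N 0 ≤ ε ^ 2)
    (hNstep : ∀ n, N n ≤ 9 / 4 * ε ^ 2 →
      |N (n + 1) - N n| ≤ C * (A * N n ^ ((3 : ℝ) / 2) + N n ^ (((r : ℝ) + 1) / 2))) :
    ∀ n : ℕ,
      (n : ℝ) ≤ (5 / (4 * C * (3 / 2 : ℝ) ^ (r + 1))) / (A * ε + ε ^ (r - 1)) →
      N n ≤ 9 / 4 * ε ^ 2 := by
  intro n hn
  set s := A * ε + ε ^ (r - 1)
  have hs : 0 < s := by positivity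
  set D := C * (3 / 2 : ℝ) ^ (r + 1) * s * ε ^ 2 with hD_def
  have hD : 0 < D := by positivity
  have hstep : ∀ k, N k ≤ ε ^ 2 + 5 / 4 * ε ^ 2 → N (k + 1) - N k ≤ D := by
    intro k hk
    have hk' : N k ≤ 9 / 4 * ε ^ 2 := by linarith
    have hforce := mul_rpow_three_halves_add_rpow_le (r := r) (by omega) hA0 hε0.le (hNpos k)
      (by linarith : N k ≤ (3 / 2 * ε) ^ 2)
    calc N (k + 1) - N k ≤ |N (k + 1) - N k| := le_abs_self _
      _ ≤ C * (A * N k ^ ((3 : ℝ) / 2) + N k ^ (((r : ℝ) + 1) / 2)) := hNstep k hk'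
      _ ≤ C * ((3 / 2) ^ (r + 1) * s * ε ^ 2) := by gcongr
      _ = D := by ring
  have hnD : (n : ℝ) * D ≤ 5 / 4 * ε ^ 2 := by
    calc (n : ℝ) * D ≤ 5 / (4 * C * (3 / 2 : ℝ) ^ (r + 1)) / s * D := by gcongr
      _ = 5 / 4 * ε ^ 2 := by rw [hD_def]; field_simp
  linarith [le_add_mul_of_sub_le_of_le hD.le hN0 hstep n hnD]

/-- Discrete bootstrap lemma, core of the proof of Theorem 4.4.
If `(N_n)` is a nonnegative sequence with `N_0 ≤ ε²` and
`|N_{n+1} − N_n| ≤ C (A N_n^{3/2} + N_n^{(r+1)/2})` whenever `N_n ≤ (9/4)ε²`, then with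
`c = 5/(4C(3/2)^{r+1})` one has `N_n ≤ (9/4)ε²` for all `n ≤ c/(Aε + ε^{r-1})`. -/
theorem discrete_bootstrap
    (C : ℝ) (hC : 0 < C) (r : ℕ) (hr : 3 ≤ r)
    (A : ℝ) (hA0 : 0 ≤ A) (hA1 : A ≤ 1) (ε : ℝ) (hε0 : 0 < ε) (hε1 : ε ≤ 1)
    (N : ℕ → ℝ) (hNpos : ∀ n, 0 ≤ N n) (hN0 : N 0 ≤ ε ^ 2)
    (hNstep : ∀ n, N n ≤ 9 / 4 * ε ^ 2 →
      |N (n + 1) - N n| ≤ C * (A * N n ^ ((3 : ℝ) / 2) + N n ^ (((r : ℝ) + 1) / 2))) :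
    ∀ n : ℕ,
      (n : ℝ) ≤ (5 / (4 * C * (3 / 2 : ℝ) ^ (r + 1))) / (A * ε + ε ^ (r - 1)) →
      N n ≤ 9 / 4 * ε ^ 2 :=
  discrete_bootstrap_general C hC r hr A hA0 ε hε0 N hNpos hN0 hNstep
end

section
/- Existence of a numerically resonant step size for the midpoint-type integrators (Section 2.1): let ω_k = k² − 2/(10 + 2k²) for k ∈ ℤ. Then ω_2 + ω_5 − ω_{−7} ≠ 0, yet there exists a real number h > 0 such that arctan(h·ω_2/2) + arctan(h·ω_5/2) − arctan(h·ω_{−7}/2) = 0. -/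
/-- Existence of a numerically resonant step size for the midpoint-type
integrators, Section 2.1: with the frequencies `ω_k = k² − 2/(10 + 2k²)` of the linear
part of the Schrödinger equation, the combination `ω₂ + ω₅ − ω₋₇` does not vanish, yet
there is a step size `h > 0` with
`arctan(hω₂/2) + arctan(hω₅/2) − arctan(hω₋₇/2) = 0`. -/
theorem exists_resonant_stepsize_midpoint
    (ω : ℤ → ℝ) (hω : ∀ k : ℤ, ω k = (k : ℝ) ^ 2 - 2 / (10 + 2 * (k : ℝ) ^ 2)) :
    ω 2 + ω 5 - ω (-7) ≠ 0 ∧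
      ∃ h : ℝ, 0 < h ∧
        Real.arctan (h * ω 2 / 2) + Real.arctan (h * ω 5 / 2)
          - Real.arctan (h * ω (-7) / 2) = 0 := by
  have h2 : ω 2 = 35 / 9 := by rw [hω]; norm_num
  have h5 : ω 5 = 749 / 30 := by rw [hω]; norm_num
  have h7 : ω (-7) = 2645 / 54 := by rw [hω]; norm_num
  rw [h2, h5, h7]
  constructor
  · norm_num
  · set K : ℝ := 1173744 / 69338675 with hK
    have hKpos : (0 : ℝ) < K := by norm_num
    refine ⟨Real.sqrt K, Real.sqrt_pos.mpr hKpos, ?_⟩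
    set h := Real.sqrt K with hh
    have hsq : h ^ 2 = K := Real.sq_sqrt hKpos.le
    have hpos : 0 < h := Real.sqrt_pos.mpr hKpos
    have hmul : (h * (35 / 9) / 2) * (h * (749 / 30) / 2) < 1 := by
      have : (h * (35 / 9) / 2) * (h * (749 / 30) / 2) = (26215 / 1080) * h ^ 2 := by ring
      rw [this, hsq, hK]; norm_num
    rw [Real.arctan_add hmul]
    rw [sub_eq_zero]
    congr 1
    have hne : (1 : ℝ) - (h * (35 / 9) / 2) * (h * (749 / 30) / 2) ≠ 0 := by
      have : (h * (35 / 9) / 2) * (h * (749 / 30) / 2) = (26215 / 1080) * h ^ 2 := by ring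
      rw [this, hsq, hK]; norm_num
    rw [div_eq_iff hne]
    linear_combination (69338675 / 116640 * h) * hsq
end

section
/- Quantitative error of frequency truncation on the linear flow (linear core of Theorem 3.1): let ω : N → ℝ satisfy |ω_a| ≤ C·|a|^m for all a ∈ N, with constants C > 0 and m > 0, where |a| = max(1,‖a‖). Let K > 0, h > 0 with Ch/K ≤ 1, set Λ = K/h, and let ω^Λ_a = ω_a if ω_a ≤ Λ and ω^Λ_a = 0 otherwise. Then for every t ∈ ℝ, every s ≥ 0, every σ ≥ 0, and every sequence (z_a)_{a∈N} of complex numbers, Σ_{a∈N} |a|^{2s}·|e^{−itω_a} − e^{−itω^Λ_a}|²·|z_a|² ≤ 4·(Ch/K)^{2σ/m} · Σ_{a∈N} |a|^{2(s+σ)}·|z_a|² (an inequality in [0,∞]). -/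
open scoped BigOperators

/-- `|a| = max(1, ‖a‖)` with `‖a‖` the Euclidean norm of `a ∈ ℤ^d`. -/
noncomputable def absN {d : ℕ} (a : Fin d → ℤ) : ℝ :=
  max 1 (Real.sqrt (∑ i, ((a i : ℝ)) ^ 2))

/-!
The truncation changes only the frequencies `ω_a > Λ = K/h`. For those the growth bound gives
`1 < (Ch/K)|a|^m`, hence `1 ≤ (Ch/K)^{2σ/m}|a|^{2σ}`, while the two unimodular phases differ by
at most `2`. So each term of the left-hand sum is at most `4 (Ch/K)^{2σ/m} |a|^{2σ}` times the
corresponding term `|a|^{2s}|z_a|²` of the right-hand sum, and the bound sums up in `[0,∞]`.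
-/

lemma ENNReal.tsum_ofReal_le_ofReal_mul_tsum_ofReal {α : Type*} {f g : α → ℝ} {c : ℝ}
    (hc : 0 ≤ c) (hfg : ∀ a, f a ≤ c * g a) :
    ∑' a, ENNReal.ofReal (f a) ≤ ENNReal.ofReal c * ∑' a, ENNReal.ofReal (g a) :=
  calc ∑' a, ENNReal.ofReal (f a)
      ≤ ∑' a, ENNReal.ofReal (c * g a) :=
        ENNReal.tsum_le_tsum fun a => ENNReal.ofReal_le_ofReal (hfg a)
    _ = ENNReal.ofReal c * ∑' a, ENNReal.ofReal (g a) := by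
        simp_rw [ENNReal.ofReal_mul hc, ENNReal.tsum_mul_left]

lemma one_le_rpow_div_mul_rpow_of_one_le_mul_rpow {x A m p : ℝ} (hx : 0 ≤ x) (hA : 0 ≤ A)
    (hm : 0 < m) (hp : 0 ≤ p) (h : 1 ≤ x * A ^ m) : 1 ≤ x ^ (p / m) * A ^ p := by
  have hpow : (A ^ m) ^ (p / m) = A ^ p := by
    rw [← Real.rpow_mul hA, mul_div_cancel₀ p hm.ne']
  rw [← hpow, ← Real.mul_rpow hx (Real.rpow_nonneg hA m)]
  exact Real.one_le_rpow h (div_nonneg hp hm.le)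

lemma norm_exp_neg_mul_I_sub_exp_neg_mul_I_le_two (t x y : ℝ) :
    ‖Complex.exp (-((t : ℂ) * (x : ℂ)) * Complex.I) -
      Complex.exp (-((t : ℂ) * (y : ℂ)) * Complex.I)‖ ≤ 2 := by
  have hunit : ∀ u : ℝ, ‖Complex.exp (-((t : ℂ) * (u : ℂ)) * Complex.I)‖ = 1 := fun u => by
    simpa using Complex.norm_exp_ofReal_mul_I (-(t * u))
  calc _ ≤ _ := norm_sub_le _ _
    _ = 2 := by rw [hunit, hunit]; norm_num

lemma norm_sq_exp_sub_exp_truncation_le {x C m K h t σ A : ℝ} (hC : 0 < C) (hm : 0 < m)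
    (hK : 0 < K) (hh : 0 < h) (hσ : 0 ≤ σ) (hA : 0 ≤ A) (hx : |x| ≤ C * A ^ m) :
    ‖Complex.exp (-((t : ℂ) * (x : ℂ)) * Complex.I) -
        Complex.exp (-((t : ℂ) * ((if x ≤ K / h then x else 0 : ℝ) : ℂ)) * Complex.I)‖ ^ 2
      ≤ 4 * (C * h / K) ^ (2 * σ / m) * A ^ (2 * σ) := by
  have hbound_nonneg : 0 ≤ 4 * (C * h / K) ^ (2 * σ / m) * A ^ (2 * σ) := by positivity
  split_ifs with hcut
  · simpa using hbound_nonneg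
  have habove : 1 ≤ C * h / K * A ^ m := by
    rw [div_mul_eq_mul_div, le_div_iff₀ hK, one_mul]
    have := (div_lt_iff₀ hh).mp ((not_le.mp hcut).trans_le ((le_abs_self x).trans hx))
    linarith
  have hweight : 1 ≤ (C * h / K) ^ (2 * σ / m) * A ^ (2 * σ) :=
    one_le_rpow_div_mul_rpow_of_one_le_mul_rpow (by positivity) hA hm (by positivity) habove
  have hdiff := norm_exp_neg_mul_I_sub_exp_neg_mul_I_le_two t x 0
  calc _ ≤ (2 : ℝ) ^ 2 := pow_le_pow_left₀ (norm_nonneg _) hdiff 2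
    _ ≤ _ := by linarith

theorem truncation_error_linear_flow_general
    {d : ℕ} (ω : (Fin d → ℤ) → ℝ) (C m : ℝ) (hC : 0 < C) (hm : 0 < m)
    (hgrowth : ∀ a : Fin d → ℤ, |ω a| ≤ C * absN a ^ m)
    (K h : ℝ) (hK : 0 < K) (hh : 0 < h)
    (Λ : ℝ) (hΛ : Λ = K / h)
    (ωΛ : (Fin d → ℤ) → ℝ) (hωΛ : ∀ a, ωΛ a = if ω a ≤ Λ then ω a else 0)
    (t s σ : ℝ) (hσ : 0 ≤ σ) (z : (Fin d → ℤ) → ℂ) :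
    ∑' a : Fin d → ℤ,
        ENNReal.ofReal (absN a ^ (2 * s) *
          ‖Complex.exp (-((t : ℂ) * (ω a : ℂ)) * Complex.I) -
            Complex.exp (-((t : ℂ) * (ωΛ a : ℂ)) * Complex.I)‖ ^ 2 *
          ‖z a‖ ^ 2)
      ≤ ENNReal.ofReal (4 * (C * h / K) ^ (2 * σ / m)) *
        ∑' a : Fin d → ℤ,
          ENNReal.ofReal (absN a ^ (2 * (s + σ)) * ‖z a‖ ^ 2) := by
  refine ENNReal.tsum_ofReal_le_ofReal_mul_tsum_ofReal (by positivity) fun a => ?_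
  have hA : 0 < absN a := one_pos.trans_le (le_max_left _ _)
  have hsymbol := norm_sq_exp_sub_exp_truncation_le (t := t) hC hm hK hh hσ hA.le (hgrowth a)
  rw [← hΛ, ← hωΛ] at hsymbol
  rw [mul_add, Real.rpow_add hA]
  calc _ ≤ absN a ^ (2 * s) * (4 * (C * h / K) ^ (2 * σ / m) * absN a ^ (2 * σ)) *
          ‖z a‖ ^ 2 := by gcongr
    _ = _ := by ring

/-- Quantitative error of frequency truncation on the linear flow, linear
core of Theorem 3.1: if `|ω_a| ≤ C|a|^m`, `Ch/K ≤ 1`, `Λ = K/h` and `ω^Λ` is the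
truncation of `ω` at `Λ`, then for all `t ∈ ℝ`, `s, σ ≥ 0` and all complex sequences `z`,
`Σ_a |a|^{2s} |e^{−itω_a} − e^{−itω^Λ_a}|² |z_a|²
  ≤ 4 (Ch/K)^{2σ/m} Σ_a |a|^{2(s+σ)} |z_a|²` (an inequality in `[0,∞]`). -/
theorem truncation_error_linear_flow
    {d : ℕ} (hd : 1 ≤ d) (ω : (Fin d → ℤ) → ℝ) (C m : ℝ) (hC : 0 < C) (hm : 0 < m)
    (hgrowth : ∀ a : Fin d → ℤ, |ω a| ≤ C * absN a ^ m)
    (K h : ℝ) (hK : 0 < K) (hh : 0 < h) (hCh : C * h / K ≤ 1)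
    (Λ : ℝ) (hΛ : Λ = K / h)
    (ωΛ : (Fin d → ℤ) → ℝ) (hωΛ : ∀ a, ωΛ a = if ω a ≤ Λ then ω a else 0)
    (t s σ : ℝ) (hs : 0 ≤ s) (hσ : 0 ≤ σ) (z : (Fin d → ℤ) → ℂ) :
    ∑' a : Fin d → ℤ,
        ENNReal.ofReal (absN a ^ (2 * s) *
          ‖Complex.exp (-((t : ℂ) * (ω a : ℂ)) * Complex.I) -
            Complex.exp (-((t : ℂ) * (ωΛ a : ℂ)) * Complex.I)‖ ^ 2 *
          ‖z a‖ ^ 2)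
      ≤ ENNReal.ofReal (4 * (C * h / K) ^ (2 * σ / m)) *
        ∑' a : Fin d → ℤ,
          ENNReal.ofReal (absN a ^ (2 * (s + σ)) * ‖z a‖ ^ 2) :=
  truncation_error_linear_flow_general ω C m hC hm hgrowth K h hK hh Λ hΛ ωΛ hωΛ t s σ hσ z
end
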